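/- If {ξ_k}_{k=1}^N are i.i.d. standard normal random variables and λ_1,…,λ_N are real numbers, then there is a numerical constant c > 0 such that for all t > 0, P(|∑_k λ_k(ξ_k² - 1)| ≥ t) ≤ 2 max( exp(-c t² / ∑_k λ_k²), exp(-c t / max_k |λ_k|) ). -/

import Mathlib

/-!
Chernoff's method. For `ξ ~ N(0,1)` the moment generating function of `ξ² - 1` is
`e^{-u} (1 - 2u)^{-1/2}`, which is at most `e^{4u²}` for `u ≤ 1/4`. By independence, the mgf
of `S = ∑ λ_k (ξ_k² - 1)` at `±s` is then at most `e^{4 s² ∑ λ_k²}` as long as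
`s · max |λ_k| ≤ 1/4`, and Markov's inequality for `e^{±sS}` gives
`P(|S| ≥ t) ≤ 2 e^{-st + 4 s² ∑ λ_k²}`. The choice
`s = min (t / (8 ∑ λ_k²)) (1 / (8 max |λ_k|))` makes the exponent at most
`-(1/16) min (t² / ∑ λ_k², t / max |λ_k|)`.
-/

open MeasureTheory ProbabilityTheory Real

namespace Real

lemma exp_neg_le_one_sub_mul_exp_two_mul_sq {x : ℝ} (hx : x ≤ 1 / 2) :
    exp (-x) ≤ (1 - x) * exp (2 * x ^ 2) := by
  have h1x : 0 < 1 - x := by linarith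
  have hlog : 1 - (1 - x)⁻¹ ≤ log (1 - x) := one_sub_inv_le_log_of_pos h1x
  have hsplit : -x = 1 - (1 - x)⁻¹ + x ^ 2 / (1 - x) := by field_simp; ring
  have hquad : x ^ 2 / (1 - x) ≤ 2 * x ^ 2 := by
    rw [div_le_iff₀ h1x]; nlinarith [sq_nonneg x]
  rw [← exp_log h1x, ← exp_add]
  gcongr
  linarith

lemma neg_mul_add_mul_sq_le_max {σ M t s : ℝ} (hσ : 0 < σ) (hM : 0 < M) (ht : 0 < t)
    (hs : s = min (t / (8 * σ)) (1 / (8 * M))) :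
    -s * t + 4 * σ * s ^ 2 ≤ max (-(1 / 16 * t ^ 2) / σ) (-(1 / 16 * t) / M) := by
  have hs₀ : 0 ≤ s := by rw [hs]; positivity
  have hquad : 4 * σ * s ^ 2 ≤ s * t / 2 := by
    have : 8 * σ * s ≤ t := by
      rw [← le_div_iff₀' (by positivity), hs]; exact min_le_left _ _
    nlinarith
  have hmin : -s * t / 2 = max (-(1 / 16 * t ^ 2) / σ) (-(1 / 16 * t) / M) := by
    simp only [hs, neg_mul, neg_div, max_neg_neg, neg_inj]
    rw [min_mul_of_nonneg _ _ ht.le, ← min_div_div_right zero_le_two]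
    congr 1 <;> field_simp <;> ring
  linarith

end Real

namespace ProbabilityTheory

/-- Valid for every `u`: for `u ≥ 1/2` both sides are junk zeros. -/
lemma integral_exp_mul_sq_gaussianReal (u : ℝ) :
    ∫ x, exp (u * x ^ 2) ∂gaussianReal 0 1 = (√(1 - 2 * u))⁻¹ := by
  have hpdf (x : ℝ) : gaussianPDFReal 0 1 x • exp (u * x ^ 2)
      = (√(2 * π))⁻¹ * exp (-(1 / 2 - u) * x ^ 2) := by
    rw [gaussianPDFReal, smul_eq_mul, mul_assoc, ← exp_add]
    simp only [NNReal.coe_one, mul_one, sub_zero]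
    ring_nf
  rw [integral_gaussianReal_eq_integral_smul one_ne_zero, integral_congr_ae (ae_of_all _ hpdf),
    integral_const_mul, integral_gaussian, ← sqrt_inv, ← sqrt_mul (by positivity), ← sqrt_inv]
  congr 1
  field_simp

lemma mgf_sq_sub_one_gaussianReal (u : ℝ) :
    mgf (fun x => x ^ 2 - 1) (gaussianReal 0 1) u = exp (-u) * (√(1 - 2 * u))⁻¹ := by
  have h (x : ℝ) : exp (u * (x ^ 2 - 1)) = exp (-u) * exp (u * x ^ 2) := by
    rw [← exp_add]; ring_nf
  simp_rw [mgf, h, integral_const_mul, integral_exp_mul_sq_gaussianReal u]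

lemma mgf_sq_sub_one_gaussianReal_le {u : ℝ} (hu : u ≤ 1 / 4) :
    mgf (fun x => x ^ 2 - 1) (gaussianReal 0 1) u ≤ exp (4 * u ^ 2) := by
  have h12 : 0 < 1 - 2 * u := by linarith
  rw [mgf_sq_sub_one_gaussianReal u,
    ← pow_le_pow_iff_left₀ (by positivity) (by positivity) two_ne_zero, mul_pow, inv_pow,
    sq_sqrt h12.le, ← exp_nat_mul, ← exp_nat_mul, ← div_eq_mul_inv, div_le_iff₀ h12]
  have h := exp_neg_le_one_sub_mul_exp_two_mul_sq (x := 2 * u) (by linarith)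
  push_cast
  ring_nf at h ⊢
  exact h

variable {Ω : Type*} {mΩ : MeasurableSpace Ω} {μ : Measure Ω}

lemma measureReal_abs_ge_le_of_mgf_le [IsFiniteMeasure μ] {X : Ω → ℝ} {s b : ℝ}
    (hs : 0 ≤ s) (h_int : ∀ r, |r| = s → Integrable (fun ω => exp (r * X ω)) μ)
    (h_mgf : ∀ r, |r| = s → mgf X μ r ≤ exp b) (t : ℝ) :
    μ.real {ω | t ≤ |X ω|} ≤ 2 * exp (-s * t + b) := by
  have hs_abs : |s| = s := abs_of_nonneg hs
  have hs_neg_abs : |-s| = s := by rw [abs_neg, hs_abs]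
  have hsplit : {ω | t ≤ |X ω|} ⊆ {ω | t ≤ X ω} ∪ {ω | X ω ≤ -t} := fun ω hω => by
    rcases le_abs'.1 (show t ≤ |X ω| from hω) with h | h
    exacts [Or.inr h, Or.inl h]
  calc μ.real {ω | t ≤ |X ω|}
      ≤ μ.real {ω | t ≤ X ω} + μ.real {ω | X ω ≤ -t} :=
        (measureReal_mono hsplit).trans (measureReal_union_le _ _)
    _ ≤ exp (-s * t) * mgf X μ s + exp (-(-s) * -t) * mgf X μ (-s) :=
        add_le_add (measure_ge_le_exp_mul_mgf t hs (h_int s hs_abs))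
          (measure_le_le_exp_mul_mgf (-t) (by linarith) (h_int (-s) hs_neg_abs))
    _ ≤ exp (-s * t) * exp b + exp (-s * t) * exp b := by
        rw [show - -s * -t = -s * t by ring]
        gcongr
        exacts [h_mgf s hs_abs, h_mgf (-s) hs_neg_abs]
    _ = 2 * exp (-s * t + b) := by rw [exp_add]; ring

/-- `mgf_sum₀` needs no integrability, and a positive mgf forces integrability. -/
lemma iIndepFun.integrable_exp_mul_sum₀ {ι : Type*} {X : ι → Ω → ℝ}
    (h_indep : iIndepFun X μ) (h_meas : ∀ i, AEMeasurable (X i) μ) {t : ℝ} {s : Finset ι}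
    (h_int : ∀ i ∈ s, Integrable (fun ω => exp (t * X i ω)) μ) :
    Integrable (fun ω => exp (t * (∑ i ∈ s, X i) ω)) μ := by
  have := h_indep.isProbabilityMeasure
  rw [← mgf_pos_iff, h_indep.mgf_sum₀ h_meas]
  exact Finset.prod_pos fun i hi => mgf_pos (h_int i hi)

lemma iIndepFun.mgf_sum_le {ι : Type*} {X : ι → Ω → ℝ} (h_indep : iIndepFun X μ)
    (h_meas : ∀ i, AEMeasurable (X i) μ) {t : ℝ} {s : Finset ι} {b : ι → ℝ}
    (h_mgf : ∀ i ∈ s, mgf (X i) μ t ≤ exp (b i)) :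
    mgf (∑ i ∈ s, X i) μ t ≤ exp (∑ i ∈ s, b i) := by
  rw [h_indep.mgf_sum₀ h_meas, exp_sum]
  exact Finset.prod_le_prod (fun i _ => mgf_nonneg) h_mgf

variable {ξ : Ω → ℝ}

lemma HasLaw.mgf_mul_sq_sub_one (hξ : HasLaw ξ (gaussianReal 0 1) μ) (a s : ℝ) :
    mgf (fun ω => a * (ξ ω ^ 2 - 1)) μ s
      = mgf (fun x => x ^ 2 - 1) (gaussianReal 0 1) (a * s) := by
  rw [mgf_const_mul, ← hξ.map_eq, mgf_map hξ.aemeasurable (by fun_prop)]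
  rfl

lemma HasLaw.integrable_exp_mul_mul_sq_sub_one (hξ : HasLaw ξ (gaussianReal 0 1) μ) {a s : ℝ}
    (h : a * s < 1 / 2) : Integrable (fun ω => exp (s * (a * (ξ ω ^ 2 - 1)))) μ := by
  have := hξ.isProbabilityMeasure
  rw [← mgf_pos_iff, hξ.mgf_mul_sq_sub_one, mgf_sq_sub_one_gaussianReal]
  exact mul_pos (exp_pos _) (inv_pos.2 (sqrt_pos.2 (by linarith)))

lemma HasLaw.mgf_mul_sq_sub_one_le (hξ : HasLaw ξ (gaussianReal 0 1) μ) {a s : ℝ}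
    (h : a * s ≤ 1 / 4) :
    mgf (fun ω => a * (ξ ω ^ 2 - 1)) μ s ≤ exp (4 * a ^ 2 * s ^ 2) := by
  rw [hξ.mgf_mul_sq_sub_one, mul_assoc, ← mul_pow]
  exact mgf_sq_sub_one_gaussianReal_le h

end ProbabilityTheory

theorem weighted_chi_sq_tail_bound :
    ∃ c : ℝ, 0 < c ∧
      ∀ {Ω : Type} [MeasurableSpace Ω] (μ : Measure Ω) [IsProbabilityMeasure μ]
        (N : ℕ) (hN : 0 < N) (ξ : Fin N → Ω → ℝ) (lam : Fin N → ℝ),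
        iIndepFun ξ μ →
        (∀ k, Measure.map (ξ k) μ = gaussianReal 0 1) →
        0 < ∑ k, (lam k) ^ 2 →
        ∀ t : ℝ, 0 < t →
          (μ {ω | t ≤ |∑ k, lam k * ((ξ k ω) ^ 2 - 1)|}).toReal ≤
            2 * max (Real.exp (-(c * t ^ 2) / ∑ k, (lam k) ^ 2))
              (Real.exp (-(c * t) /
                (Finset.univ.sup' (Finset.univ_nonempty_iff.mpr (Fin.pos_iff_nonempty.mp hN))
                  fun k => |lam k|))) := by
  refine ⟨1 / 16, by norm_num, ?_⟩
  intro Ω _ μ _ N hN ξ lam hindep hmap hσ t ht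
  set σ := ∑ k, lam k ^ 2
  set M := Finset.univ.sup' _ fun k => |lam k|
  have hlam_le (k : Fin N) : |lam k| ≤ M := Finset.le_sup' (fun k => |lam k|) (Finset.mem_univ k)
  have hM : 0 < M := by
    obtain ⟨k, -, hk⟩ := Finset.exists_ne_zero_of_sum_ne_zero hσ.ne'
    exact (abs_pos.2 (pow_ne_zero_iff two_ne_zero |>.1 hk)).trans_le (hlam_le k)
  set s := min (t / (8 * σ)) (1 / (8 * M)) with hs
  have hs₀ : 0 ≤ s := by positivity
  have hlam_mul {k : Fin N} {r : ℝ} (hr : |r| = s) : lam k * r ≤ 1 / 4 :=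
    calc lam k * r ≤ |lam k| * |r| := (le_abs_self _).trans_eq (abs_mul _ _)
      _ ≤ M * (1 / (8 * M)) := by
          rw [hr]; exact mul_le_mul (hlam_le k) (min_le_right _ _) hs₀ hM.le
      _ ≤ 1 / 4 := by field_simp; norm_num
  have hξ (k : Fin N) : HasLaw (ξ k) (gaussianReal 0 1) μ :=
    ⟨.of_map_ne_zero (hmap k ▸ IsProbabilityMeasure.ne_zero _), hmap k⟩
  set X : Fin N → Ω → ℝ := fun k ω => lam k * (ξ k ω ^ 2 - 1)
  have hX_indep : iIndepFun X μ := hindep.comp (fun k x => lam k * (x ^ 2 - 1)) (by fun_prop)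
  have hX_meas (k : Fin N) : AEMeasurable (X k) μ :=
    ((hξ k).aemeasurable.pow_const 2).sub_const 1 |>.const_mul _
  have h_int (r : ℝ) (hr : |r| = s) : Integrable (fun ω => exp (r * (∑ k, X k) ω)) μ :=
    hX_indep.integrable_exp_mul_sum₀ hX_meas fun k _ =>
      (hξ k).integrable_exp_mul_mul_sq_sub_one (by linarith [hlam_mul (k := k) hr])
  have h_mgf (r : ℝ) (hr : |r| = s) : mgf (∑ k, X k) μ r ≤ exp (4 * σ * s ^ 2) := by
    refine (hX_indep.mgf_sum_le hX_meas fun k _ =>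
      (hξ k).mgf_mul_sq_sub_one_le (hlam_mul hr)).trans_eq ?_
    rw [← sq_abs r, hr, ← Finset.sum_mul, ← Finset.mul_sum]
  have h_tail := measureReal_abs_ge_le_of_mgf_le hs₀ h_int h_mgf t
  simp only [Finset.sum_apply, X] at h_tail
  refine h_tail.trans ?_
  rw [← Monotone.map_max exp_monotone]
  gcongr
  exact neg_mul_add_mul_sq_le_max hσ hM ht hs
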